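/- Let G = (V, E) be a directed graph on K vertices with edge probabilities p(i,j) ∈ [0,1], and define vertex weights w^in_i = (|C^in(i)|⁻¹·∑_{j∈C^in(i)} p(j,i))⁻¹ and w^out_i = (|C^out(i)|⁻¹·∑_{j∈C^out(i)} p(i,j))⁻¹, assuming all denominators are positive. Then ∑_{i∈V} w^in_i / |C^in(i)| ≤ 3·(α_w(G, w^in) + α_w(G, w^out))·ln(K + 1). -/
import Mathlib


open Finset

/-- a set of vertices is independent in a directed graph, ignoring orientation. -/
def IsIndepSet {V : Type*} (E : V → V → Prop) (S : Finset V) : Prop :=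
  ∀ i ∈ S, ∀ j ∈ S, i ≠ j → ¬ E i j ∧ ¬ E j i

/-- the weighted independence number of a directed graph. -/
noncomputable def weightedIndepNum {V : Type*} [Fintype V]
    (E : V → V → Prop) (w : V → ℝ) : ℝ :=
  sSup {x | ∃ S : Finset V, IsIndepSet E S ∧ x = ∑ i ∈ S, w i}

/-- closed in-neighborhood. -/
def Cin {V : Type*} [Fintype V] [DecidableEq V]
    (E : V → V → Prop) [DecidableRel E] (i : V) : Finset V :=
  insert i (Finset.univ.filter (fun j => E j i))

/-- closed out-neighborhood. -/
def Cout {V : Type*} [Fintype V] [DecidableEq V]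
    (E : V → V → Prop) [DecidableRel E] (i : V) : Finset V :=
  insert i (Finset.univ.filter (fun j => E i j))

lemma sum_le_weightedIndepNum {V : Type*} [Fintype V]
    (E : V → V → Prop) (w : V → ℝ) {I : Finset V} (hI : IsIndepSet E I) :
    ∑ i ∈ I, w i ≤ weightedIndepNum E w := by
  have hfin : ({x | ∃ S : Finset V, IsIndepSet E S ∧ x = ∑ i ∈ S, w i}).Finite := by
    have hset : {x | ∃ S : Finset V, IsIndepSet E S ∧ x = ∑ i ∈ S, w i}
        = (fun T : Finset V => ∑ i ∈ T, w i) '' {T : Finset V | IsIndepSet E T} := by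
      ext x
      constructor
      · rintro ⟨S, hS, rfl⟩; exact ⟨S, hS, rfl⟩
      · rintro ⟨S, hS, rfl⟩; exact ⟨S, hS, rfl⟩
    rw [hset]
    exact Set.Finite.image _ (Set.toFinite _)
  exact le_csSup hfin.bddAbove ⟨I, hI, rfl⟩

lemma weightedIndepNum_nonneg {V : Type*} [Fintype V] (E : V → V → Prop) (w : V → ℝ) :
    0 ≤ weightedIndepNum E w := by
  have h := sum_le_weightedIndepNum E w (I := (∅ : Finset V)) (by intro i hi; simp at hi)
  simpa using h

/-- Key combinatorial lemma: every finite digraph has an independent set whose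
total closed in-degree is at least a third of the number of vertices (plus one). -/
lemma exists_good_indep {V : Type*} [Fintype V] [DecidableEq V]
    (E : V → V → Prop) [DecidableRel E] :
    ∀ n : ℕ, ∀ U : Finset V, U.card ≤ n → U.Nonempty →
      ∃ I : Finset V, I ⊆ U ∧ IsIndepSet E I ∧
        U.card + 1 ≤ 3 * ∑ x ∈ I, ((Cin E x) ∩ U).card := by
  intro n
  induction n with
  | zero =>
    intro U hle hne
    exact absurd (Finset.card_pos.2 hne) (by omega)
  | succ n ih =>
    intro U hle hne
    set i : V → ℕ := fun x => (U.filter (fun j => j ≠ x ∧ E j x)).card with hidef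
    set o : V → ℕ := fun x => (U.filter (fun j => x ≠ j ∧ E x j)).card with hodef
    have hio : ∑ x ∈ U, i x = ∑ x ∈ U, o x := by
      simp only [hidef, hodef, Finset.card_filter]
      exact Finset.sum_comm
    have hex : ∃ x ∈ U, o x ≤ 2 * i x := by
      by_contra hcon
      push_neg at hcon
      have h2 : ∑ x ∈ U, (2 * i x + 1) ≤ ∑ x ∈ U, o x :=
        Finset.sum_le_sum (fun x hx => by have := hcon x hx; omega)
      have h3 : ∑ x ∈ U, (2 * i x + 1) = 2 * (∑ x ∈ U, i x) + U.card := by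
        rw [Finset.sum_add_distrib, ← Finset.mul_sum, Finset.sum_const, smul_eq_mul, mul_one]
      have h4 : 0 < U.card := Finset.card_pos.2 hne
      omega
    obtain ⟨x₀, hx₀U, hx₀⟩ := hex
    have hi₀ : (U.filter (fun j => j ≠ x₀ ∧ E j x₀)).card = i x₀ := by rw [hidef]
    have ho₀ : (U.filter (fun j => x₀ ≠ j ∧ E x₀ j)).card = o x₀ := by rw [hodef]
    set R : Finset V := insert x₀ ((U.filter (fun j => j ≠ x₀ ∧ E j x₀))
        ∪ (U.filter (fun j => x₀ ≠ j ∧ E x₀ j))) with hR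
    have hx₀R : x₀ ∈ R := by rw [hR]; exact Finset.mem_insert_self _ _
    have hRcard : R.card ≤ 1 + (i x₀ + o x₀) := by
      rw [hR]
      refine (Finset.card_insert_le _ _).trans ?_
      have h5 := Finset.card_union_le (U.filter (fun j => j ≠ x₀ ∧ E j x₀))
        (U.filter (fun j => x₀ ≠ j ∧ E x₀ j))
      omega
    set U' : Finset V := U \ R with hU'
    have hU'sub : U' ⊆ U := by rw [hU']; exact Finset.sdiff_subset
    have hx₀notU' : x₀ ∉ U' := by
      rw [hU']
      simp [hx₀R]
    have hU'lt : U'.card < U.card :=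
      Finset.card_lt_card ((Finset.ssubset_iff_of_subset hU'sub).2 ⟨x₀, hx₀U, hx₀notU'⟩)
    have hUsplit : U.card ≤ U'.card + R.card := by
      rw [hU']
      refine (Finset.card_le_card (fun x hx => ?_)).trans (Finset.card_union_le _ _)
      by_cases hxR : x ∈ R
      · exact Finset.mem_union.2 (Or.inr hxR)
      · exact Finset.mem_union.2 (Or.inl (Finset.mem_sdiff.2 ⟨hx, hxR⟩))
    have hx₀Fin : x₀ ∉ (U.filter (fun j => j ≠ x₀ ∧ E j x₀)) := by simp
    have hcin : 1 + i x₀ ≤ ((Cin E x₀) ∩ U).card := by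
      have hsub : insert x₀ (U.filter (fun j => j ≠ x₀ ∧ E j x₀)) ⊆ (Cin E x₀) ∩ U := by
        intro j hj
        rcases Finset.mem_insert.1 hj with rfl | hj
        · refine Finset.mem_inter.2 ⟨?_, hx₀U⟩
          unfold Cin
          exact Finset.mem_insert_self _ _
        · obtain ⟨hjU, _, hE⟩ := Finset.mem_filter.1 hj
          refine Finset.mem_inter.2 ⟨?_, hjU⟩
          unfold Cin
          exact Finset.mem_insert_of_mem (Finset.mem_filter.2 ⟨Finset.mem_univ _, hE⟩)
      have hc := Finset.card_le_card hsub
      rw [Finset.card_insert_of_notMem hx₀Fin] at hc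
      omega
    rcases U'.eq_empty_or_nonempty with hUe | hUne
    · refine ⟨{x₀}, Finset.singleton_subset_iff.2 hx₀U, ?_, ?_⟩
      · intro a ha b hb hab
        rw [Finset.mem_singleton] at ha hb
        subst ha; subst hb
        exact absurd rfl hab
      · rw [Finset.sum_singleton]
        have hU'0 : U'.card = 0 := by rw [hUe]; simp
        omega
    · have hle' : U'.card ≤ n := by omega
      obtain ⟨I', hI'U, hI'ind, hI'sum⟩ := ih U' hle' hUne
      have hx₀I' : x₀ ∉ I' := fun h => hx₀notU' (hI'U h)
      have hnonadj : ∀ y ∈ I', ¬ E x₀ y ∧ ¬ E y x₀ := by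
        intro y hy
        have hyU' := hI'U hy
        have hyR : y ∉ R := by
          have := hyU'
          rw [hU'] at this
          exact (Finset.mem_sdiff.1 this).2
        have hyU : y ∈ U := hU'sub hyU'
        have hyne : y ≠ x₀ := by rintro rfl; exact hyR hx₀R
        constructor
        · intro hE
          refine hyR ?_
          rw [hR]
          exact Finset.mem_insert_of_mem (Finset.mem_union_right _
            (Finset.mem_filter.2 ⟨hyU, Ne.symm hyne, hE⟩))
        · intro hE
          refine hyR ?_
          rw [hR]
          exact Finset.mem_insert_of_mem (Finset.mem_union_left _
            (Finset.mem_filter.2 ⟨hyU, hyne, hE⟩))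
      refine ⟨insert x₀ I', ?_, ?_, ?_⟩
      · intro a ha
        rcases Finset.mem_insert.1 ha with rfl | ha'
        · exact hx₀U
        · exact hU'sub (hI'U ha')
      · intro a ha b hb hab
        rcases Finset.mem_insert.1 ha with rfl | ha' <;> rcases Finset.mem_insert.1 hb with rfl | hb'
        · exact absurd rfl hab
        · exact hnonadj b hb'
        · exact ⟨(hnonadj a ha').2, (hnonadj a ha').1⟩
        · exact hI'ind a ha' b hb' hab
      · rw [Finset.sum_insert hx₀I']
        have hmono : ∑ x ∈ I', ((Cin E x) ∩ U').card ≤ ∑ x ∈ I', ((Cin E x) ∩ U).card :=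
          Finset.sum_le_sum (fun x _ => Finset.card_le_card
            (Finset.inter_subset_inter (Finset.Subset.refl _) hU'sub))
        omega

lemma harmonic_tail_le_log : ∀ n : ℕ,
    (∑ k ∈ Finset.range n, (1 : ℝ) / ((k : ℝ) + 2)) ≤ Real.log ((n : ℝ) + 1) := by
  intro n
  induction n with
  | zero => simp
  | succ n ih =>
    rw [Finset.sum_range_succ]
    have hpos1 : (0 : ℝ) < (n : ℝ) + 1 := by positivity
    have hpos2 : (0 : ℝ) < (n : ℝ) + 2 := by positivity
    have h1 : Real.log (((n : ℝ) + 1) / ((n : ℝ) + 2)) ≤ ((n : ℝ) + 1) / ((n : ℝ) + 2) - 1 :=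
      Real.log_le_sub_one_of_pos (by positivity)
    have h2 : Real.log (((n : ℝ) + 1) / ((n : ℝ) + 2))
        = Real.log ((n : ℝ) + 1) - Real.log ((n : ℝ) + 2) :=
      Real.log_div hpos1.ne' hpos2.ne'
    have h3 : ((n : ℝ) + 1) / ((n : ℝ) + 2) - 1 = -(1 / ((n : ℝ) + 2)) := by
      field_simp
      norm_num
    have h4 : 1 / ((n : ℝ) + 2) ≤ Real.log ((n : ℝ) + 2) - Real.log ((n : ℝ) + 1) := by
      rw [h2, h3] at h1
      linarith
    have hcast : ((n : ℕ) + 1 : ℝ) + 1 = (n : ℝ) + 2 := by push_cast; ring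
    push_cast
    rw [show ((n : ℝ) + 1 + 1) = ((n : ℝ) + 2) by ring]
    linarith

theorem stmt_15 {V : Type*} [Fintype V] [DecidableEq V] (K : ℕ)
    (hK : Fintype.card V = K)
    (E : V → V → Prop) [DecidableRel E]
    (p : V → V → ℝ) (hp : ∀ i j, 0 ≤ p i j ∧ p i j ≤ 1)
    (hposIn : ∀ i, 0 < ∑ j ∈ Cin E i, p j i)
    (hposOut : ∀ i, 0 < ∑ j ∈ Cout E i, p i j)
    (win wout : V → ℝ)
    (hwin : ∀ i, win i = ((Cin E i).card : ℝ) / ∑ j ∈ Cin E i, p j i)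
    (hwout : ∀ i, wout i = ((Cout E i).card : ℝ) / ∑ j ∈ Cout E i, p i j) :
    ∑ i, win i / ((Cin E i).card : ℝ) ≤
      3 * (weightedIndepNum E win + weightedIndepNum E wout) * Real.log ((K : ℝ) + 1) := by
  classical
  set Sf : V → ℝ := fun x => ∑ j ∈ Cin E x, p j x with hSf
  have hSfpos : ∀ x, 0 < Sf x := hposIn
  set A := weightedIndepNum E win with hA
  set B := weightedIndepNum E wout with hB
  have hAle : ∀ I : Finset V, IsIndepSet E I → ∑ i ∈ I, win i ≤ A :=
    fun I hI => sum_le_weightedIndepNum E win hI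
  have hA0 : 0 ≤ A := weightedIndepNum_nonneg E win
  have hB0 : 0 ≤ B := weightedIndepNum_nonneg E wout
  -- key step: the max of Sf over a nonempty U is at least (|U|+1)/(3A)
  have hkey : ∀ U : Finset V, ∀ x' ∈ U, (∀ y ∈ U, Sf y ≤ Sf x') →
      ((U.card : ℝ) + 1) ≤ 3 * (A * Sf x') := by
    intro U x' hx'U hmax
    obtain ⟨I, hIU, hIind, hIsum⟩ := exists_good_indep E U.card U le_rfl ⟨x', hx'U⟩
    have hcast : ((U.card : ℝ) + 1) ≤ 3 * ∑ x ∈ I, (((Cin E x) ∩ U).card : ℝ) := by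
      have h : ((U.card + 1 : ℕ) : ℝ) ≤ ((3 * ∑ x ∈ I, ((Cin E x) ∩ U).card : ℕ) : ℝ) :=
        Nat.cast_le.mpr hIsum
      push_cast at h
      linarith
    have hterm : ∀ x ∈ I, (((Cin E x) ∩ U).card : ℝ) ≤ win x * Sf x' := by
      intro x hxI
      have hxU := hIU hxI
      have h1 : (((Cin E x) ∩ U).card : ℝ) ≤ ((Cin E x).card : ℝ) :=
        Nat.cast_le.2 (Finset.card_le_card Finset.inter_subset_left)
      have h2 : win x * Sf x = ((Cin E x).card : ℝ) := by
        rw [hwin x]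
        exact div_mul_cancel₀ _ (hSfpos x).ne'
      have hwpos : 0 ≤ win x := by
        rw [hwin x]
        exact div_nonneg (Nat.cast_nonneg _) (hposIn x).le
      have h3 := mul_le_mul_of_nonneg_left (hmax x hxU) hwpos
      linarith
    have hsum2 : ∑ x ∈ I, (((Cin E x) ∩ U).card : ℝ) ≤ (∑ x ∈ I, win x) * Sf x' := by
      rw [Finset.sum_mul]
      exact Finset.sum_le_sum hterm
    have hAI := hAle I hIind
    have hSp : (0 : ℝ) < Sf x' := hSfpos x'
    have h5 : (∑ x ∈ I, win x) * Sf x' ≤ A * Sf x' :=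
      mul_le_mul_of_nonneg_right hAI hSp.le
    linarith
  -- main induction: peel off the max-Sf vertex
  have hmain : ∀ n : ℕ, ∀ U : Finset V, U.card = n →
      ∑ x ∈ U, (Sf x)⁻¹ ≤ 3 * A * (∑ k ∈ Finset.range n, (1 : ℝ) / ((k : ℝ) + 2)) := by
    intro n
    induction n with
    | zero =>
      intro U hc
      rw [Finset.card_eq_zero.1 hc]
      simp
    | succ n ih =>
      intro U hc
      have hne : U.Nonempty := Finset.card_pos.1 (by omega)
      obtain ⟨x', hx'U, hmax⟩ := U.exists_max_image Sf hne
      have hkey' := hkey U x' hx'U hmax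
      have hS : (0 : ℝ) < Sf x' := hSfpos x'
      have hinv : (Sf x')⁻¹ ≤ 3 * A / ((n : ℝ) + 2) := by
        rw [inv_eq_one_div, div_le_div_iff₀ hS (by positivity)]
        rw [hc] at hkey'
        push_cast at hkey'
        nlinarith
      have hrest := ih (U.erase x') (by rw [Finset.card_erase_of_mem hx'U, hc]; omega)
      have hsplit : ∑ x ∈ U, (Sf x)⁻¹ = ∑ x ∈ U.erase x', (Sf x)⁻¹ + (Sf x')⁻¹ :=
        (Finset.sum_erase_add U _ hx'U).symm
      rw [hsplit, Finset.sum_range_succ]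
      have hexp : 3 * A * ((∑ k ∈ Finset.range n, (1 : ℝ) / ((k : ℝ) + 2)) + 1 / ((n : ℝ) + 2))
          = 3 * A * (∑ k ∈ Finset.range n, (1 : ℝ) / ((k : ℝ) + 2)) + 3 * A / ((n : ℝ) + 2) := by
        ring
      rw [hexp]
      exact add_le_add hrest hinv
  have hterm : ∀ x : V, win x / ((Cin E x).card : ℝ) = (Sf x)⁻¹ := by
    intro x
    have hc0 : ((Cin E x).card : ℝ) ≠ 0 := by
      have h : 0 < (Cin E x).card := Finset.card_pos.2 ⟨x, Finset.mem_insert_self _ _⟩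
      exact_mod_cast h.ne'
    rw [hwin x, div_right_comm, div_self hc0, one_div]
  have hlog : (0 : ℝ) ≤ Real.log ((K : ℝ) + 1) := Real.log_nonneg (by push_cast; linarith [Nat.cast_nonneg (α := ℝ) K])
  calc ∑ i, win i / ((Cin E i).card : ℝ)
      = ∑ i, (Sf i)⁻¹ := Finset.sum_congr rfl (fun x _ => hterm x)
    _ ≤ 3 * A * (∑ k ∈ Finset.range K, (1 : ℝ) / ((k : ℝ) + 2)) :=
        hmain K Finset.univ (by rw [Finset.card_univ, hK])
    _ ≤ 3 * A * Real.log ((K : ℝ) + 1) :=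
        mul_le_mul_of_nonneg_left (harmonic_tail_le_log K) (by linarith)
    _ ≤ 3 * (A + B) * Real.log ((K : ℝ) + 1) := by nlinarith
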